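/- Fix k ≥ 0, m ≥ 1 and rates λ_1,...,λ_m > 0. Suppose for each j ∈ {k+1,...,k+m} the identity E[e^{-αW_j}] = β(α)^{j-1} Π_{i=0}^{j-k-1} λ_{m-i}/(λ_{m-i}-α) - Σ_{h=k+1}^{j} ϱ_h β(α)^{j-h} (α/(λ_{m-h+k+1}-α)) Π_{w=0}^{j-1-h} λ_{m+k-h-w}/(λ_{m+k-h-w}-α) holds in a neighborhood of α=0, where β(α)=E[e^{-αB}], E[B] < ∞, and ϱ_h = P(W_h = 0). Then E[W_j] = (j-1)E[B] - Σ_{i=0}^{j-k-1} 1/λ_{m-i} + Σ_{h=k+1}^{j} ϱ_h/λ_{m-h+k+1}. -/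

import Mathlib

/-!
Both sides of the transform identity have a right derivative at `α = 0`. On the left it is
`-E[W_j]`, by dominated convergence of the difference quotients `(e^{-α W} - 1) / α`, which are
bounded by `W`. On the right every factor `λ / (λ - α)` equals `1` at `0` and has derivative
`1 / λ`, and `β` has right derivative `-E[B]`. Since the two functions agree on `[0, ε)`, their
right derivatives at `0` coincide.
-/

open MeasureTheory Set Filter Topology

lemma abs_exp_neg_mul_sub_one_div_le {α x : ℝ} (hα : 0 < α) (hx : 0 ≤ x) :
    |(Real.exp (-α * x) - 1) / α| ≤ x := by
  have hle : Real.exp (-α * x) ≤ 1 := Real.exp_le_one_iff.mpr (by nlinarith)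
  have hge : 1 - α * x ≤ Real.exp (-α * x) := by linarith [Real.add_one_le_exp (-α * x)]
  rw [abs_div, abs_of_pos hα, div_le_iff₀ hα, abs_of_nonpos (by linarith)]
  linarith

lemma integrable_exp_neg_mul {Ω : Type*} [MeasurableSpace Ω] {μ : Measure Ω}
    [IsFiniteMeasure μ] {X : Ω → ℝ} (hX : AEStronglyMeasurable X μ) (hX0 : 0 ≤ᵐ[μ] X)
    {α : ℝ} (hα : 0 ≤ α) : Integrable (fun ω => Real.exp (-α * X ω)) μ := by
  refine (integrable_const 1).mono' (by fun_prop) ?_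
  filter_upwards [hX0] with ω hω
  rw [Real.norm_eq_abs, abs_of_pos (Real.exp_pos _), Real.exp_le_one_iff]
  nlinarith [show (0 : ℝ) ≤ X ω from hω]

lemma hasDerivWithinAt_integral_exp_neg_mul {Ω : Type*} [MeasurableSpace Ω] {μ : Measure Ω}
    [IsFiniteMeasure μ] {X : Ω → ℝ} (hX : Integrable X μ) (hX0 : 0 ≤ᵐ[μ] X) :
    HasDerivWithinAt (fun α => ∫ ω, Real.exp (-α * X ω) ∂μ) (-∫ ω, X ω ∂μ) (Ici 0) 0 := by
  have hquot : Tendsto (fun α : ℝ => ∫ ω, (Real.exp (-α * X ω) - 1) / α ∂μ) (𝓝[>] 0)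
      (𝓝 (∫ ω, -X ω ∂μ)) := by
    refine tendsto_integral_filter_of_dominated_convergence X ?_ ?_ hX ?_
    · exact .of_forall fun α => by have := hX.1; fun_prop
    · filter_upwards [self_mem_nhdsWithin] with α (hα : 0 < α)
      filter_upwards [hX0] with ω hω
      exact abs_exp_neg_mul_sub_one_div_le hα hω
    · refine .of_forall fun ω => ?_
      have hd : HasDerivAt (fun α : ℝ => Real.exp (-α * X ω)) (-X ω) 0 := by
        simpa using ((hasDerivAt_id (0 : ℝ)).neg.mul_const (X ω)).exp
      simpa [div_eq_inv_mul] using hd.tendsto_slope_zero_right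
  rw [hasDerivWithinAt_iff_tendsto_slope, Ici_sdiff_left, ← integral_neg]
  refine hquot.congr' ?_
  filter_upwards [self_mem_nhdsWithin] with α (hα : 0 < α)
  rw [integral_div, integral_sub (integrable_exp_neg_mul hX.1 hX0 hα.le) (integrable_const 1),
    slope_def_field]
  simp

section Derivatives

variable {𝕜 ι : Type*} [NontriviallyNormedField 𝕜]

lemma HasDerivAt.finsetProd_of_eq_one {s : Finset ι} {f : ι → 𝕜 → 𝕜} {f' : ι → 𝕜} {x : 𝕜}
    (hf : ∀ i ∈ s, HasDerivAt (f i) (f' i) x) (hf1 : ∀ i ∈ s, f i x = 1) :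
    HasDerivAt (fun y => ∏ i ∈ s, f i y) (∑ i ∈ s, f' i) x := by
  classical
  refine (HasDerivAt.fun_finsetProd hf).congr_deriv (Finset.sum_congr rfl fun i _ => ?_)
  rw [Finset.prod_eq_one fun j hj => hf1 j (Finset.mem_of_mem_erase hj), one_smul]

lemma hasDerivAt_div_sub {c : 𝕜} (hc : c ≠ 0) :
    HasDerivAt (fun α => c / (c - α)) c⁻¹ 0 := by
  refine ((hasDerivAt_const (0 : 𝕜) c).div ((hasDerivAt_const 0 c).sub (hasDerivAt_id 0))
    (by simpa)).congr_deriv ?_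
  simp
  field_simp

lemma hasDerivAt_id_div_sub {c : 𝕜} (hc : c ≠ 0) :
    HasDerivAt (fun α => α / (c - α)) c⁻¹ 0 := by
  refine ((hasDerivAt_id (0 : 𝕜)).div ((hasDerivAt_const 0 c).sub (hasDerivAt_id 0))
    (by simpa)).congr_deriv ?_
  simp
  field_simp

lemma prod_div_sub_zero {s : Finset ι} {c : ι → 𝕜} (hc : ∀ i ∈ s, c i ≠ 0) :
    ∏ i ∈ s, c i / (c i - 0) = 1 :=
  Finset.prod_eq_one fun i hi => by rw [sub_zero, div_self (hc i hi)]

lemma hasDerivAt_prod_div_sub {s : Finset ι} {c : ι → 𝕜} (hc : ∀ i ∈ s, c i ≠ 0) :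
    HasDerivAt (fun α => ∏ i ∈ s, c i / (c i - α)) (∑ i ∈ s, (c i)⁻¹) 0 :=
  HasDerivAt.finsetProd_of_eq_one (fun i hi => hasDerivAt_div_sub (hc i hi))
    fun i hi => by rw [sub_zero, div_self (hc i hi)]

variable {β : 𝕜 → 𝕜} {b : 𝕜} {u : Set 𝕜} {s : Finset ι} {c : ι → 𝕜}

lemma hasDerivWithinAt_pow_mul_prod_div_sub (hβ : HasDerivWithinAt β b u 0) (hβ0 : β 0 = 1)
    (n : ℕ) (hc : ∀ i ∈ s, c i ≠ 0) :
    HasDerivWithinAt (fun α => β α ^ n * ∏ i ∈ s, c i / (c i - α))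
      (n * b + ∑ i ∈ s, (c i)⁻¹) u 0 := by
  refine ((hβ.pow n).mul (hasDerivAt_prod_div_sub hc).hasDerivWithinAt).congr_deriv ?_
  rw [prod_div_sub_zero hc]
  simp [hβ0]

lemma hasDerivWithinAt_mul_pow_mul_id_div_sub_mul_prod (hβ : HasDerivWithinAt β b u 0)
    (hβ0 : β 0 = 1) (r : 𝕜) (n : ℕ) {a : 𝕜} (ha : a ≠ 0) (hc : ∀ i ∈ s, c i ≠ 0) :
    HasDerivWithinAt (fun α => r * β α ^ n * (α / (a - α)) * ∏ i ∈ s, c i / (c i - α))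
      (r * a⁻¹) u 0 := by
  refine ((((hβ.pow n).const_mul r).mul (hasDerivAt_id_div_sub ha).hasDerivWithinAt).mul
    (hasDerivAt_prod_div_sub hc).hasDerivWithinAt).congr_deriv ?_
  rw [prod_div_sub_zero hc]
  simp [hβ0]

end Derivatives

theorem mean_waiting_time_general {Ω : Type*} [MeasurableSpace Ω] (P : Measure Ω)
    [IsProbabilityMeasure P] (k m : ℕ)
    (lam : ℕ → ℝ) (hlam : ∀ j ∈ Finset.Icc 1 m, 0 < lam j)
    (B : Ω → ℝ) (hBpos : ∀ ω, 0 ≤ B ω) (hBint : Integrable B P)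
    (W : ℕ → Ω → ℝ) (hWpos : ∀ j ω, 0 ≤ W j ω)
    (hWint : ∀ j, Integrable (W j) P)
    (β : ℝ → ℝ) (hβ : ∀ α : ℝ, β α = ∫ ω, Real.exp (-α * B ω) ∂P)
    (ϱ : ℕ → ℝ)
    (htrans : ∃ ε > (0 : ℝ), ∀ α : ℝ, 0 ≤ α → α < ε →
      ∀ j, k + 1 ≤ j → j ≤ k + m →
        ∫ ω, Real.exp (-α * W j ω) ∂P
          = β α ^ (j - 1) * (∏ i ∈ Finset.range (j - k), lam (m - i) / (lam (m - i) - α))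
            - ∑ h ∈ Finset.Icc (k + 1) j, ϱ h * β α ^ (j - h) *
                (α / (lam (m + k + 1 - h) - α)) *
                ∏ w ∈ Finset.range (j - h), lam (m + k - h - w) / (lam (m + k - h - w) - α)) :
    ∀ j, k + 1 ≤ j → j ≤ k + m →
      ∫ ω, W j ω ∂P
        = ((j : ℝ) - 1) * (∫ ω, B ω ∂P)
          - ∑ i ∈ Finset.range (j - k), 1 / lam (m - i)
          + ∑ h ∈ Finset.Icc (k + 1) j, ϱ h / lam (m + k + 1 - h) := by
  intro j hkj hjm
  obtain ⟨ε, hε, htr⟩ := htrans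
  have hlam0 : ∀ i, 1 ≤ i → i ≤ m → lam i ≠ 0 := fun i h1 h2 =>
    (hlam i (Finset.mem_Icc.mpr ⟨h1, h2⟩)).ne'
  have hβ0 : β 0 = 1 := by simp [hβ]
  have hβ' : HasDerivWithinAt β (-∫ ω, B ω ∂P) (Ici 0) 0 := by
    simpa only [← hβ] using hasDerivWithinAt_integral_exp_neg_mul hBint (ae_of_all _ hBpos)
  have hrhs := (hasDerivWithinAt_pow_mul_prod_div_sub (s := Finset.range (j - k))
      (c := fun i => lam (m - i)) hβ' hβ0 (j - 1) fun i hi => by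
        simp only [Finset.mem_range] at hi; exact hlam0 (m - i) (by omega) (by omega)).sub <|
    HasDerivWithinAt.fun_sum (u := Finset.Icc (k + 1) j) fun h hh => by
      simp only [Finset.mem_Icc] at hh
      exact hasDerivWithinAt_mul_pow_mul_id_div_sub_mul_prod (s := Finset.range (j - h))
        (c := fun w => lam (m + k - h - w)) hβ' hβ0 (ϱ h) (j - h)
        (hlam0 (m + k + 1 - h) (by omega) (by omega)) fun w hw => by
          simp only [Finset.mem_range] at hw; exact hlam0 (m + k - h - w) (by omega) (by omega)
  have hlhs := hrhs.congr_of_eventuallyEq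
    (eventually_of_mem (Ico_mem_nhdsGE hε) fun α hα => htr α hα.1 hα.2 j hkj hjm)
    (htr 0 le_rfl hε j hkj hjm)
  have hmean := (uniqueDiffWithinAt_Ici 0).eq_deriv _
    (hasDerivWithinAt_integral_exp_neg_mul (hWint j) (ae_of_all _ (hWpos j))) hlhs
  rw [Nat.cast_sub (by omega : 1 ≤ j), Nat.cast_one] at hmean
  simp only [div_eq_mul_inv, one_mul]
  linarith

theorem mean_waiting_time {Ω : Type*} [MeasurableSpace Ω] (P : Measure Ω)
    [IsProbabilityMeasure P] (k m : ℕ) (hm : 1 ≤ m)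
    (lam : ℕ → ℝ) (hlam : ∀ j ∈ Finset.Icc 1 m, 0 < lam j)
    (B : Ω → ℝ) (hB : Measurable B) (hBpos : ∀ ω, 0 ≤ B ω) (hBint : Integrable B P)
    (W : ℕ → Ω → ℝ) (hW : ∀ j, Measurable (W j)) (hWpos : ∀ j ω, 0 ≤ W j ω)
    (hWint : ∀ j, Integrable (W j) P)
    (β : ℝ → ℝ) (hβ : ∀ α : ℝ, β α = ∫ ω, Real.exp (-α * B ω) ∂P)
    (ϱ : ℕ → ℝ) (hϱ : ∀ h, ϱ h = (P {ω | W h ω = 0}).toReal)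
    (htrans : ∃ ε > (0 : ℝ), ∀ α : ℝ, 0 ≤ α → α < ε →
      ∀ j, k + 1 ≤ j → j ≤ k + m →
        ∫ ω, Real.exp (-α * W j ω) ∂P
          = β α ^ (j - 1) * (∏ i ∈ Finset.range (j - k), lam (m - i) / (lam (m - i) - α))
            - ∑ h ∈ Finset.Icc (k + 1) j, ϱ h * β α ^ (j - h) *
                (α / (lam (m + k + 1 - h) - α)) *
                ∏ w ∈ Finset.range (j - h), lam (m + k - h - w) / (lam (m + k - h - w) - α)) :
    ∀ j, k + 1 ≤ j → j ≤ k + m →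
      ∫ ω, W j ω ∂P
        = ((j : ℝ) - 1) * (∫ ω, B ω ∂P)
          - ∑ i ∈ Finset.range (j - k), 1 / lam (m - i)
          + ∑ h ∈ Finset.Icc (k + 1) j, ϱ h / lam (m + k + 1 - h) :=
  mean_waiting_time_general P k m lam hlam B hBpos hBint W hWpos hWint β hβ ϱ htrans
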